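/- arXiv:2309.14506 — 4 statements merged into one kernel-verified Lean document; each statement's English description precedes it below -/
import Mathlib

section
/- Let X ∈ St(d,p), G ∈ ℝ^{d×p} with X^T G = 0, and let X + G = QR be a QR decomposition with Q ∈ St(d,p) and R ∈ ℝ^{p×p} upper triangular and invertible. Let σ_1,…,σ_p ∈ (0,1] be the singular values of X^T Q. Then Σ_{i=1}^p (arccos(σ_i))^2 ≤ ‖G‖_F^2. -/
open Matrix

lemma arccos_sq_le {s : ℝ} (h0 : 0 < s) (h1 : s ≤ 1) :
    (Real.arccos s) ^ 2 ≤ (s⁻¹) ^ 2 - 1 := by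
  have hθ0 : 0 ≤ Real.arccos s := Real.arccos_nonneg s
  have hθπ : Real.arccos s < Real.pi / 2 := Real.arccos_lt_pi_div_two.2 h0
  have hcos : Real.cos (Real.arccos s) = s := Real.cos_arccos (by linarith) h1
  have hsin : Real.sin (Real.arccos s) = Real.sqrt (1 - s ^ 2) := Real.sin_arccos s
  rcases eq_or_lt_of_le hθ0 with h | h
  · rw [← h]
    have : (1:ℝ) ≤ (s⁻¹) ^ 2 := by
      nlinarith [mul_inv_cancel₀ h0.ne', inv_pos.2 h0, sq_nonneg (s⁻¹ - 1)]
    simpa using this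
  · have htan : Real.arccos s ≤ Real.tan (Real.arccos s) :=
      (Real.lt_tan h hθπ).le
    have htan' : Real.tan (Real.arccos s) = Real.sqrt (1 - s ^ 2) / s := by
      rw [Real.tan_eq_sin_div_cos, hcos, hsin]
    have hb : (Real.arccos s) ^ 2 ≤ (Real.sqrt (1 - s ^ 2) / s) ^ 2 := by
      rw [← htan']
      exact pow_le_pow_left₀ hθ0 htan 2
    refine hb.trans ?_
    rw [div_pow, Real.sq_sqrt (by nlinarith)]
    rw [sub_div, inv_pow]
    rw [div_self (by positivity)]
    gcongr <;> simp [le_refl]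

/-- Principal angle bound: if `X ∈ St(d,p)`, `Xᵀ G = 0`, `X + G = Q R` is a QR
decomposition with `Q ∈ St(d,p)` and `R` upper triangular invertible, and
`σ_1,…,σ_p ∈ (0,1]` are the singular values of `Xᵀ Q`, then
`∑ i, arccos(σ_i)^2 ≤ ‖G‖_F^2 = tr(Gᵀ G)`. -/
theorem principal_angle_le_frobenius (d p : ℕ)
    (X Q G : Matrix (Fin d) (Fin p) ℝ) (R : Matrix (Fin p) (Fin p) ℝ)
    (σ : Fin p → ℝ)
    (hX : Xᵀ * X = 1) (hQ : Qᵀ * Q = 1) (hXG : Xᵀ * G = 0)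
    (hQR : X + G = Q * R)
    (hRtri : R.BlockTriangular id)
    (hRinv : IsUnit R)
    (hSVD : ∃ U V : Matrix (Fin p) (Fin p) ℝ,
      Uᵀ * U = 1 ∧ U * Uᵀ = 1 ∧ Vᵀ * V = 1 ∧ V * Vᵀ = 1 ∧
      Xᵀ * Q = U * Matrix.diagonal σ * Vᵀ)
    (hσ : ∀ i, 0 < σ i ∧ σ i ≤ 1) :
    ∑ i, (Real.arccos (σ i)) ^ 2 ≤ (Gᵀ * G).trace := by
  obtain ⟨U, V, hU1, hU2, hV1, hV2, hUV⟩ := hSVD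
  -- XᵀQ * R = 1
  have h1 : (Xᵀ * Q) * R = 1 := by
    have := congrArg (fun M => Xᵀ * M) hQR
    simp only [Matrix.mul_add, hX, hXG, ← Matrix.mul_assoc] at this
    simpa using this.symm
  -- RᵀR = 1 + GᵀG
  have h2 : Rᵀ * R = 1 + Gᵀ * G := by
    have hGX : Gᵀ * X = 0 := by
      have := congrArg Matrix.transpose hXG
      simpa [Matrix.transpose_mul] using this
    have := congrArg (fun M => Mᵀ * M) hQR
    simp only [Matrix.transpose_add, Matrix.transpose_mul, Matrix.add_mul,
      Matrix.mul_add, hX, hXG, hGX] at this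
    rw [Matrix.mul_assoc Rᵀ Qᵀ, ← Matrix.mul_assoc Qᵀ, hQ, Matrix.one_mul] at this
    rw [← this]
    abel
  -- R = V * E * Uᵀ where E = diagonal σ⁻¹
  set E : Matrix (Fin p) (Fin p) ℝ := Matrix.diagonal (fun i => (σ i)⁻¹) with hE
  have hDE : E * Matrix.diagonal σ = 1 := by
    rw [hE, Matrix.diagonal_mul_diagonal,
      show (fun i => (σ i)⁻¹ * σ i) = fun _ => (1:ℝ) from
        funext fun i => inv_mul_cancel₀ (hσ i).1.ne', Matrix.diagonal_one]
  have hR : R = V * E * Uᵀ := by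
    have h5 : Vᵀ * R = E * Uᵀ := by
      calc Vᵀ * R = (E * Matrix.diagonal σ) * Vᵀ * R := by rw [hDE, Matrix.one_mul]
      _ = E * (Uᵀ * U) * Matrix.diagonal σ * Vᵀ * R := by rw [hU1, Matrix.mul_one]
      _ = E * Uᵀ * (U * Matrix.diagonal σ * Vᵀ * R) := by simp only [Matrix.mul_assoc]
      _ = E * Uᵀ * ((Xᵀ * Q) * R) := by rw [← hUV]
      _ = E * Uᵀ := by rw [h1, Matrix.mul_one]
    have h6 := congrArg (fun M => V * M) h5
    simp only [← Matrix.mul_assoc, hV2, Matrix.one_mul] at h6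
    exact h6
  -- trace (RᵀR) = ∑ σᵢ⁻²
  have h3 : (Rᵀ * R).trace = ∑ i, ((σ i)⁻¹) ^ 2 := by
    have hEt : Eᵀ = E := Matrix.diagonal_transpose _
    have hRt : Rᵀ = U * E * Vᵀ := by
      rw [hR]
      simp only [Matrix.transpose_mul, Matrix.transpose_transpose, hEt, Matrix.mul_assoc]
    rw [hRt, hR]
    simp only [Matrix.mul_assoc]
    rw [← Matrix.mul_assoc Vᵀ V, hV1, Matrix.one_mul]
    rw [Matrix.trace_mul_comm]
    simp only [Matrix.mul_assoc]
    rw [hU1, Matrix.mul_one, hE, Matrix.diagonal_mul_diagonal, Matrix.trace_diagonal]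
    exact Finset.sum_congr rfl fun i _ => (sq _).symm
  -- trace (GᵀG) = ∑ σᵢ⁻² - p
  have h4 : (Gᵀ * G).trace = ∑ i, (((σ i)⁻¹) ^ 2 - 1) := by
    have : (Gᵀ * G).trace = (Rᵀ * R).trace - (1 : Matrix (Fin p) (Fin p) ℝ).trace := by
      rw [h2, Matrix.trace_add]; ring
    rw [this, h3, Matrix.trace_one, Finset.sum_sub_distrib]
    simp
  rw [h4]
  exact Finset.sum_le_sum (fun i _ => arccos_sq_le (hσ i).1 (hσ i).2)
end

section
/- Let X ∈ St(d,p), G ∈ ℝ^{d×p} with X^T G = 0, and X + G = QR with Q ∈ St(d,p), R upper triangular invertible. If σ_1,…,σ_p are the singular values of X^T Q, then Σ_{i=1}^p 1/σ_i^2 = p + ‖G‖_F^2, and in particular each σ_i ∈ (0,1]. -/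
open Matrix

/-- If `X ∈ St(d,p)`, `Xᵀ G = 0`, `X + G = Q R` with `Q ∈ St(d,p)` and `R` upper
triangular invertible, and `σ_1,…,σ_p` are the (nonnegative) singular values of
`Xᵀ Q`, then `∑ i, 1/σ_i^2 = p + ‖G‖_F^2` and each `σ_i ∈ (0,1]`. -/
theorem singular_values_of_XtQ (d p : ℕ)
    (X Q G : Matrix (Fin d) (Fin p) ℝ) (R : Matrix (Fin p) (Fin p) ℝ)
    (σ : Fin p → ℝ)
    (hX : Xᵀ * X = 1) (hQ : Qᵀ * Q = 1) (hXG : Xᵀ * G = 0)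
    (hQR : X + G = Q * R)
    (hRtri : R.BlockTriangular id)
    (hRinv : IsUnit R)
    (hσ0 : ∀ i, 0 ≤ σ i)
    (hSVD : ∃ U V : Matrix (Fin p) (Fin p) ℝ,
      Uᵀ * U = 1 ∧ U * Uᵀ = 1 ∧ Vᵀ * V = 1 ∧ V * Vᵀ = 1 ∧
      Xᵀ * Q = U * Matrix.diagonal σ * Vᵀ) :
    (∑ i, 1 / (σ i) ^ 2 = (p : ℝ) + (Gᵀ * G).trace) ∧ (∀ i, 0 < σ i ∧ σ i ≤ 1) := by
  obtain ⟨U, V, hUtU, hUUt, hVtV, hVVt, hA⟩ := hSVD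
  set A := Xᵀ * Q with hAdef
  set D := Matrix.diagonal σ with hDdef
  -- A * R = 1
  have hAR : A * R = 1 := by
    have h : Xᵀ * (Q * R) = Xᵀ * X + Xᵀ * G := by rw [← hQR, Matrix.mul_add]
    rw [hX, hXG, add_zero] at h
    rw [hAdef, Matrix.mul_assoc]; exact h
  have hRA : R * A = 1 := mul_eq_one_comm.mp hAR
  -- D * (Vᵀ * R * U) = 1
  have hDD' : D * (Vᵀ * R * U) = 1 := by
    have h1 : U * D * Vᵀ * R = 1 := by rw [← hA]; exact hAR
    have h2 : Uᵀ * (U * D * Vᵀ * R) * U = Uᵀ * 1 * U := by rw [h1]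
    simp only [← Matrix.mul_assoc] at h2 ⊢
    rw [hUtU, Matrix.one_mul, Matrix.mul_one, hUtU] at h2
    exact h2
  have hD'D : Vᵀ * R * U * D = 1 := mul_eq_one_comm.mp hDD'
  have hσne : ∀ i, σ i ≠ 0 := by
    intro i h0
    have := congrFun (congrFun hD'D i) i
    rw [hDdef, Matrix.mul_diagonal, Matrix.one_apply_eq, h0, mul_zero] at this
    exact zero_ne_one this
  -- inverse diagonal
  set E := Matrix.diagonal (fun i => (σ i)⁻¹) with hEdef
  have hDE : D * E = 1 := by
    rw [hDdef, hEdef, Matrix.diagonal_mul_diagonal,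
      show (fun i => σ i * (σ i)⁻¹) = fun _ => (1:ℝ) from
        funext fun i => mul_inv_cancel₀ (hσne i), Matrix.diagonal_one]
  -- R = V * E * Uᵀ
  have hRform : R = V * E * Uᵀ := by
    have hAS : A * (V * E * Uᵀ) = 1 := by
      rw [hA]
      calc U * D * Vᵀ * (V * E * Uᵀ) = U * (D * ((Vᵀ * V) * E)) * Uᵀ := by
            simp only [Matrix.mul_assoc]
        _ = U * Uᵀ := by rw [hVtV, Matrix.one_mul, hDE, Matrix.mul_one]
        _ = 1 := hUUt
    have h := congrArg (fun M => R * M) hAS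
    simp only [← Matrix.mul_assoc] at h
    rw [hRA, Matrix.one_mul, Matrix.mul_one] at h
    exact h.symm
  -- trace (Rᵀ * R) computed via E
  have hEt : Eᵀ = E := Matrix.diagonal_transpose _
  have htr1 : (Rᵀ * R).trace = ∑ i, 1 / (σ i) ^ 2 := by
    have hRt : Rᵀ = U * E * Vᵀ := by
      rw [hRform]
      simp only [Matrix.transpose_mul, Matrix.transpose_transpose, hEt, Matrix.mul_assoc]
    have : Rᵀ * R = U * (E * E) * Uᵀ := by
      rw [hRt, hRform]
      calc U * E * Vᵀ * (V * E * Uᵀ) = U * (E * ((Vᵀ * V) * E)) * Uᵀ := by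
            simp only [Matrix.mul_assoc]
        _ = U * (E * E) * Uᵀ := by rw [hVtV, Matrix.one_mul]
    rw [this, Matrix.trace_mul_cycle, ← Matrix.mul_assoc, hUtU, Matrix.one_mul]
    rw [hEdef, Matrix.diagonal_mul_diagonal, Matrix.trace_diagonal]
    congr 1
    funext i
    rw [one_div, sq, mul_inv]
  -- trace (Rᵀ * R) computed via G
  have htr2 : (Rᵀ * R).trace = (p : ℝ) + (Gᵀ * G).trace := by
    have h1 : Rᵀ * R = 1 + Gᵀ * G := by
      have : (X + G)ᵀ * (X + G) = Rᵀ * (Qᵀ * Q) * R := by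
        rw [hQR, Matrix.transpose_mul]
        simp only [Matrix.mul_assoc]
      rw [hQ, Matrix.mul_one] at this
      rw [← this, Matrix.transpose_add, Matrix.add_mul, Matrix.mul_add, Matrix.mul_add,
        hX, hXG]
      have hGX : Gᵀ * X = 0 := by
        have := congrArg Matrix.transpose hXG
        rwa [Matrix.transpose_mul, Matrix.transpose_transpose, Matrix.transpose_zero] at this
      rw [hGX, add_zero, zero_add]
    rw [h1, Matrix.trace_add, Matrix.trace_one]
    simp
  -- positivity of σ
  have hσpos : ∀ i, 0 < σ i := fun i => (hσ0 i).lt_of_ne' (hσne i)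
  -- σ i ≤ 1 : use projector P = 1 - X Xᵀ
  have hle : ∀ i, σ i ≤ 1 := by
    intro i
    set P : Matrix (Fin d) (Fin d) ℝ := 1 - X * Xᵀ with hPdef
    have hPt : Pᵀ = P := by
      rw [hPdef, Matrix.transpose_sub, Matrix.transpose_one, Matrix.transpose_mul,
        Matrix.transpose_transpose]
    have hPP : P * P = P := by
      rw [hPdef]
      have h2 : X * Xᵀ * (X * Xᵀ) = X * Xᵀ := by
        calc X * Xᵀ * (X * Xᵀ) = X * ((Xᵀ * X) * Xᵀ) := by simp only [Matrix.mul_assoc]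
          _ = X * Xᵀ := by rw [hX, Matrix.one_mul]
      simp only [Matrix.sub_mul, Matrix.mul_sub, Matrix.one_mul, Matrix.mul_one, h2]
      abel
    set B := P * (Q * V) with hBdef
    have hM : Bᵀ * B = 1 - D * D := by
      have hB2 : Bᵀ * B = (Q * V)ᵀ * P * (Q * V) := by
        rw [hBdef, Matrix.transpose_mul, hPt]
        simp only [Matrix.mul_assoc]
        rw [← Matrix.mul_assoc P P (Q * V), hPP]
      rw [hB2, hPdef, Matrix.mul_sub, Matrix.sub_mul, Matrix.mul_one]
      have e1 : (Q * V)ᵀ * (Q * V) = 1 := by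
        rw [Matrix.transpose_mul]
        calc Vᵀ * Qᵀ * (Q * V) = Vᵀ * ((Qᵀ * Q) * V) := by simp only [Matrix.mul_assoc]
          _ = 1 := by rw [hQ, Matrix.one_mul, hVtV]
      have e2 : (Q * V)ᵀ * (X * Xᵀ) * (Q * V) = D * D := by
        have hAt : Aᵀ = V * D * Uᵀ := by
          rw [hA]
          simp only [Matrix.transpose_mul, Matrix.transpose_transpose,
            Matrix.diagonal_transpose, Matrix.mul_assoc, hDdef]
        calc (Q * V)ᵀ * (X * Xᵀ) * (Q * V)
            = Vᵀ * (Aᵀ * (A * V)) := by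
              simp only [hAdef, Matrix.transpose_mul, Matrix.transpose_transpose,
                Matrix.mul_assoc]
          _ = Vᵀ * ((V * D * Uᵀ) * (U * D * Vᵀ * V)) := by rw [hAt, hA, Matrix.mul_assoc]
          _ = (Vᵀ * V) * (D * ((Uᵀ * U) * (D * (Vᵀ * V)))) := by simp only [Matrix.mul_assoc]
          _ = D * D := by rw [hVtV, hUtU, Matrix.mul_one, Matrix.one_mul, Matrix.one_mul]
      rw [e1, e2]
    have hdiag : 1 - σ i ^ 2 = ∑ k, (B k i) ^ 2 := by
      have := congrFun (congrFun hM i) i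
      rw [Matrix.sub_apply, Matrix.one_apply_eq, hDdef, Matrix.diagonal_mul_diagonal,
        Matrix.diagonal_apply_eq, Matrix.mul_apply] at this
      rw [← sq, ← this] at *
      rw [this]
      congr 1; funext k; rw [Matrix.transpose_apply, sq]
    have h0 : (0:ℝ) ≤ ∑ k, (B k i) ^ 2 := Finset.sum_nonneg fun k _ => sq_nonneg _
    have : σ i ^ 2 ≤ 1 := by nlinarith [hdiag]
    nlinarith [hσ0 i, this]
  refine ⟨by rw [← htr1, htr2], fun i => ⟨hσpos i, hle i⟩⟩
end

section
/- Let X ∈ St(d,p) and ξ ∈ ℝ^{d×p} with X^T ξ + ξ^T X = 0 (i.e., ξ ∈ T_X St(d,p)). For t ∈ [0,1] let c(t) be the projection of X + tξ onto St(d,p), i.e., c(t) = U(t) V(t)^T where X + tξ = U(t) Σ(t) V(t)^T is a thin SVD. Then for all t₁, t₂ ∈ [0,1], ‖c(t₁) - c(t₂)‖_F ≤ |t₁ - t₂|·‖ξ‖_F. -/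
open Matrix Set

private lemma cs_sum {n : Type*} [Fintype n] (f g : n → ℝ)
    (hf : ∑ i, f i ^ 2 = 1) (hg : ∑ i, g i ^ 2 = 1) :
    ∑ i, f i * g i ≤ 1 := by
  have h := Finset.sum_mul_sq_le_sq_mul_sq Finset.univ f g
  rw [hf, hg] at h
  nlinarith [h]

private lemma ip_eq_sum {d p : ℕ} (A B : Matrix (Fin d) (Fin p) ℝ) :
    (Aᵀ * B).trace = ∑ j : Fin p, ∑ i : Fin d, A i j * B i j := by
  simp [Matrix.trace, Matrix.diag, Matrix.mul_apply, Matrix.transpose_apply]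

private lemma ip_self_nonneg {d p : ℕ} (A : Matrix (Fin d) (Fin p) ℝ) :
    0 ≤ (Aᵀ * A).trace := by
  rw [ip_eq_sum]
  exact Finset.sum_nonneg fun j _ => Finset.sum_nonneg fun i _ => mul_self_nonneg _

private lemma ip_cauchy {d p : ℕ} (A B : Matrix (Fin d) (Fin p) ℝ) :
    (Aᵀ * B).trace ≤ Real.sqrt ((Aᵀ * A).trace) * Real.sqrt ((Bᵀ * B).trace) := by
  rw [ip_eq_sum, ip_eq_sum, ip_eq_sum]
  rw [← Real.sqrt_mul (Finset.sum_nonneg fun j _ =>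
    Finset.sum_nonneg fun i _ => mul_self_nonneg _)]
  have key : (∑ j : Fin p, ∑ i : Fin d, A i j * B i j) ^ 2 ≤
      (∑ j : Fin p, ∑ i : Fin d, A i j * A i j) * (∑ j : Fin p, ∑ i : Fin d, B i j * B i j) := by
    classical
    have h := Finset.sum_mul_sq_le_sq_mul_sq Finset.univ
      (fun q : Fin p × Fin d => A q.2 q.1) (fun q : Fin p × Fin d => B q.2 q.1)
    simpa [Fintype.sum_prod_type, sq] using h
  calc (∑ j : Fin p, ∑ i : Fin d, A i j * B i j)
      ≤ |∑ j : Fin p, ∑ i : Fin d, A i j * B i j| := le_abs_self _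
    _ = Real.sqrt ((∑ j : Fin p, ∑ i : Fin d, A i j * B i j) ^ 2) :=
        (Real.sqrt_sq_eq_abs _).symm
    _ ≤ _ := Real.sqrt_le_sqrt key

private lemma trace_diag_mul {p : ℕ} (f : Fin p → ℝ) (M : Matrix (Fin p) (Fin p) ℝ) :
    (Matrix.diagonal f * M).trace = ∑ i, f i * M i i := by
  simp [Matrix.trace, Matrix.diag, Matrix.mul_apply, Matrix.diagonal]

private lemma col_norm {d p : ℕ} (Z : Matrix (Fin d) (Fin p) ℝ)
    (h : Zᵀ * Z = 1) (i : Fin p) : ∑ k, Z k i ^ 2 = 1 := by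
  have h2 := congrFun (congrFun h i) i
  simp only [Matrix.mul_apply, Matrix.transpose_apply, Matrix.one_apply_eq] at h2
  simpa [sq] using h2

/-- Variational inequality: for `A = U Σ Vᵀ` with `Σ ⪰ I`, `c = U Vᵀ`, and any
`Y` with orthonormal columns, `⟨A - c, Y - c⟩ ≤ 0`. -/
private lemma var_ineq {d p : ℕ} (U Y : Matrix (Fin d) (Fin p) ℝ)
    (V : Matrix (Fin p) (Fin p) ℝ) (s : Fin p → ℝ)
    (hU : Uᵀ * U = 1) (hV : Vᵀ * V = 1) (hs : ∀ i, 1 ≤ s i) (hY : Yᵀ * Y = 1) :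
    ((U * Matrix.diagonal s * Vᵀ - U * Vᵀ)ᵀ * (Y - U * Vᵀ)).trace ≤ 0 := by
  set D := Matrix.diagonal (fun i => s i - 1) with hD
  have hAc : U * Matrix.diagonal s * Vᵀ - U * Vᵀ = U * D * Vᵀ := by
    have hDeq : D = Matrix.diagonal s - 1 := by
      ext i j
      by_cases h : i = j <;> simp [hD, Matrix.diagonal, Matrix.one_apply, h]
    rw [hDeq, Matrix.mul_sub, Matrix.sub_mul, Matrix.mul_one]
  rw [hAc]
  have hM : Uᵀ * ((Y - U * Vᵀ) * V) = Uᵀ * (Y * V) - 1 := by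
    rw [Matrix.sub_mul, Matrix.mul_assoc U Vᵀ V, hV, Matrix.mul_one,
      Matrix.mul_sub, hU]
  have hDt : Dᵀ = D := by rw [hD, Matrix.diagonal_transpose]
  have step : ((U * D * Vᵀ)ᵀ * (Y - U * Vᵀ)).trace
      = (D * (Uᵀ * (Y * V) - 1)).trace := by
    rw [Matrix.transpose_mul, Matrix.transpose_mul, Matrix.transpose_transpose, hDt]
    rw [Matrix.mul_assoc V (D * Uᵀ) _, Matrix.trace_mul_comm V _]
    rw [Matrix.mul_assoc (D * Uᵀ) _ V, Matrix.mul_assoc D Uᵀ _, hM]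
  rw [step, hD, trace_diag_mul]
  apply Finset.sum_nonpos
  intro i _
  have hentry : (Uᵀ * (Y * V) - 1 : Matrix (Fin p) (Fin p) ℝ) i i
      = (Uᵀ * (Y * V) : Matrix (Fin p) (Fin p) ℝ) i i - 1 := by
    simp [Matrix.sub_apply, Matrix.one_apply_eq]
  rw [hentry]
  have hYV : (Y * V)ᵀ * (Y * V) = 1 := by
    rw [Matrix.transpose_mul, Matrix.mul_assoc, ← Matrix.mul_assoc Yᵀ Y V, hY,
      Matrix.one_mul, hV]
  have hm : (Uᵀ * (Y * V)) i i ≤ 1 := by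
    have heq : (Uᵀ * (Y * V)) i i = ∑ k, U k i * (Y * V) k i := by
      rw [Matrix.mul_apply]
      exact Finset.sum_congr rfl fun k _ => by rw [Matrix.transpose_apply]
    rw [heq]
    exact cs_sum _ _ (col_norm U hU i) (col_norm (Y * V) hYV i)
  have h1 : 0 ≤ s i - 1 := by linarith [hs i]
  nlinarith [h1, hm]

/-- Nonexpansiveness of the polar/SVD projection onto the Stiefel manifold along
the line `t ↦ X + tξ`, for `X ∈ St(d,p)` and a tangent vector `ξ`:
`‖c(t₁) - c(t₂)‖_F ≤ |t₁ - t₂| ‖ξ‖_F`, where `c(t) = U(t) V(t)ᵀ` comes from a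
thin SVD `X + tξ = U(t) Σ(t) V(t)ᵀ` and `‖A‖_F = √(tr(Aᵀ A))`. -/
theorem stiefel_projection_lipschitz (d p : ℕ)
    (X ξ : Matrix (Fin d) (Fin p) ℝ)
    (hX : Xᵀ * X = 1) (hξ : Xᵀ * ξ + ξᵀ * X = 0)
    (c : ℝ → Matrix (Fin d) (Fin p) ℝ)
    (hc : ∀ t ∈ Icc (0 : ℝ) 1,
      ∃ (U : Matrix (Fin d) (Fin p) ℝ) (V : Matrix (Fin p) (Fin p) ℝ) (s : Fin p → ℝ),
        Uᵀ * U = 1 ∧ Vᵀ * V = 1 ∧ V * Vᵀ = 1 ∧ (∀ i, 0 ≤ s i) ∧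
        X + t • ξ = U * Matrix.diagonal s * Vᵀ ∧ c t = U * Vᵀ) :
    ∀ t₁ ∈ Icc (0 : ℝ) 1, ∀ t₂ ∈ Icc (0 : ℝ) 1,
      Real.sqrt (((c t₁ - c t₂)ᵀ * (c t₁ - c t₂)).trace) ≤
        |t₁ - t₂| * Real.sqrt ((ξᵀ * ξ).trace) := by
  -- the projections themselves lie on the Stiefel manifold
  have hcc : ∀ t ∈ Icc (0:ℝ) 1, (c t)ᵀ * (c t) = 1 := by
    intro t ht
    obtain ⟨U, V, s, hU, hV, hVV, _, _, hct⟩ := hc t ht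
    rw [hct, Matrix.transpose_mul, Matrix.transpose_transpose, Matrix.mul_assoc,
      ← Matrix.mul_assoc Uᵀ U Vᵀ, hU, Matrix.one_mul, hVV]
  -- variational inequality at each time
  have main : ∀ t ∈ Icc (0:ℝ) 1, ∀ Y : Matrix (Fin d) (Fin p) ℝ, Yᵀ * Y = 1 →
      (((X + t • ξ) - c t)ᵀ * (Y - c t)).trace ≤ 0 := by
    intro t ht Y hYY
    obtain ⟨U, V, s, hU, hV, hVV, hs0, hA, hct⟩ := hc t ht
    -- AᵀA = 1 + t² ξᵀξ
    have hAA : (X + t • ξ)ᵀ * (X + t • ξ) = 1 + (t * t) • (ξᵀ * ξ) := by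
      rw [Matrix.transpose_add, Matrix.transpose_smul, Matrix.add_mul, Matrix.mul_add,
        Matrix.mul_add, hX, Matrix.smul_mul, Matrix.smul_mul, Matrix.mul_smul,
        Matrix.mul_smul]
      have e : t • (Xᵀ * ξ) + (t • (ξᵀ * X) + t • t • (ξᵀ * ξ))
          = t • (Xᵀ * ξ + ξᵀ * X) + (t * t) • (ξᵀ * ξ) := by
        rw [smul_add, smul_smul]; abel
      rw [add_assoc, e, hξ, smul_zero, zero_add]
    -- AᵀA = V Σ² Vᵀ
    have hAA2 : (X + t • ξ)ᵀ * (X + t • ξ)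
        = V * (Matrix.diagonal s * Matrix.diagonal s) * Vᵀ := by
      rw [hA]
      simp only [Matrix.transpose_mul, Matrix.transpose_transpose,
        Matrix.diagonal_transpose, Matrix.mul_assoc]
      rw [← Matrix.mul_assoc Uᵀ U, hU, Matrix.one_mul]
    -- Σ² = Vᵀ (AᵀA) V
    have e : Vᵀ * ((X + t • ξ)ᵀ * (X + t • ξ)) * V
        = Matrix.diagonal s * Matrix.diagonal s := by
      rw [hAA2]
      simp only [← Matrix.mul_assoc]
      rw [hV, Matrix.one_mul, Matrix.mul_assoc, hV, Matrix.mul_one]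
    have hexp : Vᵀ * ((1 : Matrix (Fin p) (Fin p) ℝ) + (t * t) • (ξᵀ * ξ)) * V
        = 1 + (t * t) • ((ξ * V)ᵀ * (ξ * V)) := by
      rw [Matrix.mul_add, Matrix.add_mul, Matrix.mul_one, hV]
      congr 1
      rw [Matrix.mul_smul, Matrix.smul_mul]
      congr 1
      rw [Matrix.transpose_mul]
      simp only [Matrix.mul_assoc]
    have hsq : Matrix.diagonal s * Matrix.diagonal s
        = 1 + (t * t) • ((ξ * V)ᵀ * (ξ * V)) := by
      rw [← hexp, ← hAA]; exact e.symm
    -- hence s i ≥ 1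
    have hs1 : ∀ i, 1 ≤ s i := by
      intro i
      have h := congrFun (congrFun hsq i) i
      rw [Matrix.diagonal_mul_diagonal] at h
      have hl : Matrix.diagonal (fun i => s i * s i) i i = s i * s i := by
        simp [Matrix.diagonal]
      have hr : ((1 : Matrix (Fin p) (Fin p) ℝ) + (t * t) • ((ξ * V)ᵀ * (ξ * V))) i i
          = 1 + (t * t) * ((ξ * V)ᵀ * (ξ * V)) i i := by
        simp [Matrix.add_apply, Matrix.one_apply_eq, Matrix.smul_apply, smul_eq_mul]
      rw [hl, hr] at h
      have hnn : 0 ≤ (t * t) * ((ξ * V)ᵀ * (ξ * V)) i i := by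
        apply mul_nonneg (mul_self_nonneg t)
        have : ((ξ * V)ᵀ * (ξ * V)) i i = ∑ k, (ξ * V) k i * (ξ * V) k i := by
          rw [Matrix.mul_apply]
          exact Finset.sum_congr rfl fun k _ => by rw [Matrix.transpose_apply]
        rw [this]
        exact Finset.sum_nonneg fun k _ => mul_self_nonneg _
      nlinarith [hs0 i, h, hnn]
    rw [hA, hct]
    exact var_ineq U Y V s hU hV hs1 hYY
  intro t₁ ht₁ t₂ ht₂
  have h1 := main t₁ ht₁ (c t₂) (hcc t₂ ht₂)
  have h2 := main t₂ ht₂ (c t₁) (hcc t₁ ht₁)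
  set D := c t₁ - c t₂ with hDdef
  set E := (t₁ - t₂) • ξ with hEdef
  -- ⟨D, D⟩ ≤ ⟨E, D⟩
  have expand : ∀ A B C : Matrix (Fin d) (Fin p) ℝ,
      ((A - B)ᵀ * C).trace = (Aᵀ * C).trace - (Bᵀ * C).trace := by
    intro A B C
    rw [Matrix.transpose_sub, Matrix.sub_mul, Matrix.trace_sub]
  have expand2 : ∀ A B C : Matrix (Fin d) (Fin p) ℝ,
      (Aᵀ * (B - C)).trace = (Aᵀ * B).trace - (Aᵀ * C).trace := by
    intro A B C
    rw [Matrix.mul_sub, Matrix.trace_sub]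
  have key : (Dᵀ * D).trace ≤ (Eᵀ * D).trace := by
    have e1 := h1
    have e2 := h2
    rw [expand, expand2, expand2] at e1 e2
    have hE1 : ((X + t₁ • ξ)ᵀ * (c t₂)).trace - ((X + t₁ • ξ)ᵀ * (c t₁)).trace
        = -(((X + t₁ • ξ)ᵀ * D).trace) := by
      rw [hDdef, expand2]; ring
    have hE2 : ((X + t₂ • ξ)ᵀ * (c t₁)).trace - ((X + t₂ • ξ)ᵀ * (c t₂)).trace
        = ((X + t₂ • ξ)ᵀ * D).trace := by
      rw [hDdef, expand2]
    have hEdiff : ((X + t₁ • ξ)ᵀ * D).trace - ((X + t₂ • ξ)ᵀ * D).trace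
        = (Eᵀ * D).trace := by
      rw [← expand]
      congr 2
      rw [hEdef]
      rw [sub_smul]
      abel
    have hDD : (Dᵀ * D).trace
        = ((c t₁)ᵀ * D).trace - ((c t₂)ᵀ * D).trace := by
      rw [hDdef, expand]
    have hcD1 : ((c t₁)ᵀ * (c t₂)).trace - ((c t₁)ᵀ * (c t₁)).trace
        = -(((c t₁)ᵀ * D).trace) := by rw [hDdef, expand2]; ring
    have hcD2 : ((c t₂)ᵀ * (c t₁)).trace - ((c t₂)ᵀ * (c t₂)).trace
        = ((c t₂)ᵀ * D).trace := by rw [hDdef, expand2]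
    -- e1 : ⟨A₁,c₂⟩-⟨A₁,c₁⟩ - (⟨c₁,c₂⟩-⟨c₁,c₁⟩) ≤ 0
    -- e2 : ⟨A₂,c₁⟩-⟨A₂,c₂⟩ - (⟨c₂,c₁⟩-⟨c₂,c₂⟩) ≤ 0
    rw [hE1, hcD1] at e1
    rw [hE2, hcD2] at e2
    linarith [e1, e2, hEdiff, hDD]
  have cs := ip_cauchy E D
  have hDnn := ip_self_nonneg D
  have hED : Real.sqrt ((Dᵀ * D).trace) ≤ Real.sqrt ((Eᵀ * E).trace) := by
    have hxsq : Real.sqrt ((Dᵀ * D).trace) ^ 2 = (Dᵀ * D).trace := Real.sq_sqrt hDnn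
    have hxnn : 0 ≤ Real.sqrt ((Dᵀ * D).trace) := Real.sqrt_nonneg _
    have hynn : 0 ≤ Real.sqrt ((Eᵀ * E).trace) := Real.sqrt_nonneg _
    nlinarith [le_trans key cs, hxsq, hxnn, hynn]
  have hEnorm : Real.sqrt ((Eᵀ * E).trace) = |t₁ - t₂| * Real.sqrt ((ξᵀ * ξ).trace) := by
    rw [hEdef]
    have e : ((t₁ - t₂) • ξ)ᵀ * ((t₁ - t₂) • ξ) = ((t₁ - t₂) ^ 2) • (ξᵀ * ξ) := by
      rw [Matrix.transpose_smul, Matrix.smul_mul, Matrix.mul_smul, smul_smul, sq]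
    rw [e, Matrix.trace_smul, smul_eq_mul,
      Real.sqrt_mul (sq_nonneg _), Real.sqrt_sq_eq_abs]
  rw [← hEnorm]
  exact hED
end

section
/- Let f : M → ℝ be a smooth function on a Riemannian manifold with ‖grad f(x)‖_x ≤ G for all x, and satisfying the geodesic smoothness bound |f(y) - f(x) - ⟨grad f(x), Exp_x^{-1}(y)⟩_x| ≤ (L/2)‖Exp_x^{-1}(y)‖_x². Suppose Retr is a retraction with d(x, Retr_x(η)) ≤ ‖η‖_x, and a second-order retraction: d(Retr_x(η), Exp_x(η)) ≤ C‖η‖_x². Assume further the comparison inequality ‖ξ - η‖_x ≤ d(Exp_x(ξ), Exp_x(η)) for tangent vectors ξ, η. Then for L' = L + GC: |f(Retr_x(η)) - f(x) - ⟨grad f(x), η⟩_x| ≤ (L'/2)·2‖η‖_x², i.e., f is retraction-smooth with constant 2(L + GC). -/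
/-!
Write `ξ = Exp_x⁻¹(Retr_x η)`. Geodesic smoothness controls `f(Retr_x η) - f(x) - ⟨grad f(x), ξ⟩`
by `(L/2)‖ξ‖² ≤ (L/2)‖η‖²`, since `‖ξ‖ = d(x, Retr_x η) ≤ ‖η‖`. Replacing `ξ` by `η` in the inner
product costs at most `G‖ξ - η‖`, and the comparison inequality together with the second-order
property gives `‖ξ - η‖ ≤ d(Retr_x η, Exp_x η) ≤ C‖η‖²`.
-/

open RealInnerProductSpace

lemma abs_sub_inner_le_of_abs_sub_inner_le {H : Type*} [NormedAddCommGroup H]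
    [InnerProductSpace ℝ H] {g ξ η : H} {a b : ℝ} (h : |a - ⟪g, ξ⟫| ≤ b) :
    |a - ⟪g, η⟫| ≤ b + ‖g‖ * ‖ξ - η‖ :=
  calc |a - ⟪g, η⟫| = |(a - ⟪g, ξ⟫) + ⟪g, ξ - η⟫| := by rw [inner_sub_right]; ring_nf
    _ ≤ |a - ⟪g, ξ⟫| + |⟪g, ξ - η⟫| := abs_add_le _ _
    _ ≤ b + ‖g‖ * ‖ξ - η‖ := add_le_add h (abs_real_inner_le_norm _ _)

theorem retraction_smoothness_general {M : Type*} [MetricSpace M]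
    {H : Type*} [NormedAddCommGroup H] [InnerProductSpace ℝ H]
    (f : M → ℝ) (gradf : M → H) (Expm Retr : M → H → M) (ExpInv : M → M → H)
    (L G C : ℝ) (hL : 0 ≤ L)
    (hgrad : ∀ x, ‖gradf x‖ ≤ G)
    (hsmooth : ∀ x y, |f y - f x - (inner ℝ (gradf x) (ExpInv x y) : ℝ)| ≤
      L / 2 * ‖ExpInv x y‖ ^ 2)
    (hExpInv : ∀ x y, Expm x (ExpInv x y) = y)
    (hExpdist : ∀ x y, ‖ExpInv x y‖ = dist x y)
    (hretr : ∀ x η, dist x (Retr x η) ≤ ‖η‖)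
    (hso : ∀ x η, dist (Retr x η) (Expm x η) ≤ C * ‖η‖ ^ 2)
    (hcomp : ∀ x (ξ η : H), ‖ξ - η‖ ≤ dist (Expm x ξ) (Expm x η)) :
    ∀ x η, |f (Retr x η) - f x - (inner ℝ (gradf x) η : ℝ)| ≤ (L + G * C) * ‖η‖ ^ 2 := by
  intro x η
  set ξ := ExpInv x (Retr x η)
  have hξ : ‖ξ‖ ≤ ‖η‖ := (hExpdist x _).trans_le (hretr x η)
  have hξη : ‖ξ - η‖ ≤ C * ‖η‖ ^ 2 :=
    calc ‖ξ - η‖ ≤ dist (Expm x ξ) (Expm x η) := hcomp x ξ η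
      _ = dist (Retr x η) (Expm x η) := by rw [hExpInv]
      _ ≤ C * ‖η‖ ^ 2 := hso x η
  have hgeod : |f (Retr x η) - f x - ⟪gradf x, ξ⟫| ≤ L / 2 * ‖η‖ ^ 2 :=
    (hsmooth x _).trans (by gcongr)
  calc |f (Retr x η) - f x - ⟪gradf x, η⟫|
      ≤ L / 2 * ‖η‖ ^ 2 + ‖gradf x‖ * ‖ξ - η‖ := abs_sub_inner_le_of_abs_sub_inner_le hgeod
    _ ≤ L / 2 * ‖η‖ ^ 2 + G * (C * ‖η‖ ^ 2) := by
      gcongr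
      exacts [(norm_nonneg _).trans (hgrad x), hgrad x]
    _ ≤ (L + G * C) * ‖η‖ ^ 2 := by nlinarith [sq_nonneg ‖η‖]

/-- Retraction smoothness from geodesic smoothness for a second-order retraction:
if `f` is geodesically `L`-smooth with gradient bounded by `G`, the retraction
satisfies `d(x, Retr_x η) ≤ ‖η‖` and the second-order condition
`d(Retr_x η, Exp_x η) ≤ C ‖η‖²`, and the curvature comparison inequality
`‖ξ - η‖ ≤ d(Exp_x ξ, Exp_x η)` holds, then
`|f(Retr_x η) - f(x) - ⟨grad f(x), η⟩| ≤ (L + G C) ‖η‖²`. -/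
theorem retraction_smoothness {M : Type*} [MetricSpace M]
    {H : Type*} [NormedAddCommGroup H] [InnerProductSpace ℝ H]
    (f : M → ℝ) (gradf : M → H) (Expm Retr : M → H → M) (ExpInv : M → M → H)
    (L G C : ℝ) (hL : 0 ≤ L) (hG : 0 ≤ G) (hC : 0 ≤ C)
    (hgrad : ∀ x, ‖gradf x‖ ≤ G)
    (hsmooth : ∀ x y, |f y - f x - (inner ℝ (gradf x) (ExpInv x y) : ℝ)| ≤
      L / 2 * ‖ExpInv x y‖ ^ 2)
    (hExpInv : ∀ x y, Expm x (ExpInv x y) = y)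
    (hExpdist : ∀ x y, ‖ExpInv x y‖ = dist x y)
    (hretr : ∀ x η, dist x (Retr x η) ≤ ‖η‖)
    (hso : ∀ x η, dist (Retr x η) (Expm x η) ≤ C * ‖η‖ ^ 2)
    (hcomp : ∀ x (ξ η : H), ‖ξ - η‖ ≤ dist (Expm x ξ) (Expm x η)) :
    ∀ x η, |f (Retr x η) - f x - (inner ℝ (gradf x) η : ℝ)| ≤ (L + G * C) * ‖η‖ ^ 2 :=
  retraction_smoothness_general f gradf Expm Retr ExpInv L G C hL hgrad hsmooth hExpInv hExpdist
    hretr hso hcomp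
end
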